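/- Let 𝒯_n denote the set of plane binary trees with n internal nodes. For T ∈ 𝒯_n and T' ∈ 𝒯_{n+1}, define a(T, T') = ∑ q^i over all i ∈ {0,…,n} with SG(T, i) = T' (a polynomial in ℕ[q]), and define b(T, T') = 1 if T = (T')* and b(T, T') = 0 otherwise. Then for all n ≥ 0 and all T₁, T₂ ∈ 𝒯_n: ∑_{T' ∈ 𝒯_{n+1}} a(T₁, T')·b(T₂, T') = q·∑_{S ∈ 𝒯_{n-1}} b(S, T₁)·a(S, T₂) + δ_{T₁,T₂}, as an identity in ℤ[q] (for n = 0 the sum over S is empty). -/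

import Mathlib

/-!
Removing the leftmost leaf commutes with splice-and-graft: `SG(T, 0)* = T`, and
`SG(T, i + 1)* = SG(T*, i)` because splicing at a leaf other than the leftmost one leaves the
leftmost leaf in the left half. Hence in `∑_{T'} a(T₁, T') b(T₂, T') = ∑ᵢ qⁱ [T₂ = SG(T₁, i)*]`
the term `i = 0` is `δ_{T₁,T₂}` and the others add up to `q · a(T₁*, T₂)`, while on the
right-hand side `b(S, T₁)` singles out `S = T₁*`.
-/

open Polynomial

/-- A plane binary tree: either the empty tree `∅` (a single leaf attached to the root,
no internal nodes), or the graft `T₁ ∨ T₂` of two plane binary trees (joined at a new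
internal node attached to a new root). -/
inductive PBT : Type
  | empty : PBT
  | graft : PBT → PBT → PBT
deriving DecidableEq

namespace PBT

/-- The number of internal nodes of a plane binary tree. -/
def size : PBT → ℕ
  | empty => 0
  | graft l r => size l + size r + 1

/-- Splicing a plane binary tree `T` at its `i`-th leaf (leaves are numbered
`0, 1, …, size T` from left to right): following the path from leaf `i` to the root,
the edges weakly to the left form the first tree (with `i` internal nodes) and the edges
weakly to the right form the second tree (with `size T - i` internal nodes). -/
def splice : PBT → ℕ → PBT × PBT
  | empty, _ => (empty, empty)
  | graft l r, i =>
      if i ≤ size l then ((splice l i).1, graft (splice l i).2 r)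
      else (graft l (splice r (i - size l - 1)).1, (splice r (i - size l - 1)).2)

/-- `SG(T, i)`: splice `T` at leaf `i` into `(T₁, T₂)` and graft, giving `T₁ ∨ T₂`. -/
def SG (T : PBT) (i : ℕ) : PBT :=
  graft (splice T i).1 (splice T i).2

/-- `T*`: the tree obtained from `T` by removing the leftmost leaf and erasing its
parent internal node: `(∅ ∨ T₂)* = T₂` and `(T₁ ∨ T₂)* = T₁* ∨ T₂` for `T₁ ≠ ∅`. -/
def star : PBT → PBT
  | empty => empty
  | graft empty r => r
  | graft (graft a b) r => graft (star (graft a b)) r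

end PBT

/-- The up-weight in `Tree`: `a(T, T') = ∑ qⁱ` over all `i ∈ {0, …, size T}` with
`SG(T, i) = T'` (here `q = X ∈ ℤ[q]`). -/
noncomputable def treeUp (T T' : PBT) : Polynomial ℤ :=
  ∑ i ∈ Finset.range (T.size + 1), if T.SG i = T' then X ^ i else 0

/-- The down-weight in `Tree'`: `b(T, T') = 1` if `T = (T')*`, and `0` otherwise. -/
noncomputable def treeDown (T T' : PBT) : Polynomial ℤ :=
  if T = T'.star then 1 else 0

namespace PBT

theorem splice_zero (T : PBT) : splice T 0 = (empty, T) := by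
  induction T with
  | empty => rfl
  | graft l r ihl _ => simp [splice, ihl]

theorem size_splice_fst_add_size_splice_snd (T : PBT) (i : ℕ) :
    (splice T i).1.size + (splice T i).2.size = T.size := by
  induction T generalizing i with
  | empty => simp [splice, size]
  | graft l r ihl ihr =>
    by_cases h : i ≤ l.size <;> simp only [splice, h, if_true, if_false, size]
    · have := ihl i; omega
    · have := ihr (i - l.size - 1); omega

theorem size_SG (T : PBT) (i : ℕ) : (SG T i).size = T.size + 1 := by
  simp only [SG, size, size_splice_fst_add_size_splice_snd]

theorem star_graft {A : PBT} (hA : A ≠ empty) (B : PBT) :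
    star (graft A B) = graft (star A) B := by
  cases A with
  | empty => exact absurd rfl hA
  | graft a b => rfl

theorem size_star_add_one : ∀ {T : PBT}, T ≠ empty → T.star.size + 1 = T.size
  | empty, h => absurd rfl h
  | graft empty r, _ => by simp [star, size]
  | graft (graft a b) r, _ => by
      have := size_star_add_one (T := graft a b) (by simp)
      simp only [star, size] at *
      omega

theorem star_SG_zero (T : PBT) : (SG T 0).star = T := by
  simp [SG, splice_zero, star]

theorem splice_succ_fst_ne_empty {T : PBT} (hT : T ≠ empty) (i : ℕ) :
    (splice T (i + 1)).1 ≠ empty := by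
  induction T with
  | empty => exact absurd rfl hT
  | graft l r ihl _ =>
    by_cases h : i + 1 ≤ l.size
    · have hl : l ≠ empty := by rintro rfl; simp [size] at h
      simpa [splice, h] using ihl hl
    · simp [splice, h]

theorem splice_star {T : PBT} (hT : T ≠ empty) (i : ℕ) :
    splice T.star i = ((splice T (i + 1)).1.star, (splice T (i + 1)).2) := by
  induction T with
  | empty => exact absurd rfl hT
  | graft l r ihl _ =>
    cases l with
    | empty => simp [star, splice, size]
    | graft a b =>
      have hl : graft a b ≠ empty := by simp
      have hsize := size_star_add_one hl
      rw [star_graft hl]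
      by_cases h : i + 1 ≤ (graft a b).size
      · have h' : i ≤ (graft a b).star.size := by omega
        simp [splice, h, h', ihl hl]
      · have h' : ¬ i ≤ (graft a b).star.size := by omega
        have hidx : i - (graft a b).star.size - 1 = i + 1 - (graft a b).size - 1 := by omega
        simp [splice, h, h', hidx, star_graft hl]

theorem star_SG_succ {T : PBT} (hT : T ≠ empty) (i : ℕ) :
    (SG T (i + 1)).star = SG T.star i := by
  rw [SG, star_graft (splice_succ_fst_ne_empty hT i), SG, splice_star hT]

end PBT

open PBT

theorem support_treeUp_subset (T : PBT) :
    Function.support (treeUp T) ⊆ (Finset.range (T.size + 1)).image T.SG := by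
  intro T' hT'
  obtain ⟨i, hi, hSG⟩ := Finset.exists_ne_zero_of_sum_ne_zero hT'
  exact Finset.mem_image.2 ⟨i, hi, by_contra fun h => hSG (if_neg h)⟩

theorem finsum_mem_treeUp_mul (T : PBT) (f : PBT → ℤ[X]) :
    ∑ᶠ T' ∈ {T' : PBT | T'.size = T.size + 1}, treeUp T T' * f T'
      = ∑ i ∈ Finset.range (T.size + 1), X ^ i * f (T.SG i) := by
  classical
  set t := (Finset.range (T.size + 1)).image T.SG
  have hsupp : {T' : PBT | T'.size = T.size + 1} ∩ Function.support (fun T' => treeUp T T' * f T')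
      ⊆ t := fun T' hT' =>
    support_treeUp_subset T (Function.support_mul_subset_left _ _ hT'.2)
  have ht : (t : Set PBT) ⊆ {T' | T'.size = T.size + 1} := by
    simp only [t, Finset.coe_image, Set.image_subset_iff]
    exact fun i _ => size_SG T i
  rw [finsum_mem_eq_sum_of_subset _ hsupp ht]
  simp only [treeUp, Finset.sum_mul, ite_mul, zero_mul]
  rw [Finset.sum_comm]
  refine Finset.sum_congr rfl fun i hi => ?_
  rw [Finset.sum_ite_eq, if_pos (Finset.mem_image_of_mem _ hi)]

theorem finsum_mem_treeDown_mul {T : PBT} (hT : T ≠ empty) (g : PBT → ℤ[X]) :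
    ∑ᶠ S ∈ {S : PBT | S.size + 1 = T.size}, treeDown S T * g S = g T.star := by
  have hsupp : {S : PBT | S.size + 1 = T.size} ∩ Function.support (fun S => treeDown S T * g S)
      ⊆ ({T.star} : Finset PBT) := fun S hS => by
    by_contra h
    exact hS.2 (by simp_all [treeDown])
  have hstar : (({T.star} : Finset PBT) : Set PBT) ⊆ {S | S.size + 1 = T.size} := by
    simpa using size_star_add_one hT
  rw [finsum_mem_eq_sum_of_subset _ hsupp hstar, Finset.sum_singleton, treeDown, if_pos rfl,
    one_mul]

theorem stmt_11_general (n : ℕ) (T₁ T₂ : PBT) (h₁ : T₁.size = n) :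
    (∑ᶠ T' ∈ {T : PBT | T.size = n + 1}, treeUp T₁ T' * treeDown T₂ T')
      = X * (∑ᶠ S ∈ {S : PBT | S.size + 1 = n}, treeDown S T₁ * treeUp S T₂)
        + (if T₁ = T₂ then 1 else 0) := by
  subst h₁
  rw [finsum_mem_treeUp_mul, Finset.sum_range_succ', pow_zero, one_mul, treeDown,
    star_SG_zero]
  rcases eq_or_ne T₁ empty with rfl | hT₁
  · simp [size, eq_comm]
  rw [finsum_mem_treeDown_mul hT₁, treeUp, ← size_star_add_one hT₁, Finset.mul_sum]
  congr 1
  · refine Finset.sum_congr rfl fun j _ => ?_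
    simp [treeDown, star_SG_succ hT₁, pow_succ', eq_comm]
  · simp [eq_comm]

/-- The pair `(Tree, Tree')` is a quantized dual graded graph with
differential coefficient `r = 1`: for all `n ≥ 0` and all `T₁, T₂ ∈ 𝒯_n`,
`∑_{T' ∈ 𝒯_{n+1}} a(T₁,T')·b(T₂,T') = q·∑_{S ∈ 𝒯_{n-1}} b(S,T₁)·a(S,T₂) + δ_{T₁,T₂}`
in `ℤ[q]` (for `n = 0` the sum over `S` is empty). -/
theorem stmt_11 (n : ℕ) (T₁ T₂ : PBT) (h₁ : T₁.size = n) (h₂ : T₂.size = n) :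
    (∑ᶠ T' ∈ {T : PBT | T.size = n + 1}, treeUp T₁ T' * treeDown T₂ T')
      = X * (∑ᶠ S ∈ {S : PBT | S.size + 1 = n}, treeDown S T₁ * treeUp S T₂)
        + (if T₁ = T₂ then 1 else 0) :=
  stmt_11_general n T₁ T₂ h₁
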